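/- arXiv:math/0410261 — 4 statements merged into one kernel-verified Lean document; each statement's English description precedes it below -/
import Mathlib

section
/- The augmented complex of injective words C_*(m), where C_n(m) is the free abelian group on n-tuples of pairwise distinct elements of {1,...,m} with differential d(x_1,...,x_n) = Σ_{j=1}^n (-1)^{j+1}(x_1,...,x_{j-1},x_{j+1},...,x_n) and C_0(m) = ℤ, has vanishing homology in every degree n with 0 ≤ n < m. -/
/-!
For a letter `a`, the operator `cone a` prepends `a` to every word not containing it and kills
the others. On an injective word `w`, `d (cone a w) + cone a (d w)` is `w` if `a ∉ w` and
`± (a :: w.erase a)` if `a ∈ w`. So subtracting `d (cone a c)` from a cycle `c` gives a homologous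
cycle all of whose words contain `a`, without losing any letter the words of `c` already
contained. Sweeping through the alphabet leaves a cycle supported on injective words of length `n`
containing every letter, hence `0` when `n` is less than the size of the alphabet; the cones
collected along the way bound the original cycle.
-/

/-- The boundary map of the (augmented) complex of words: a word of length `n`
is sent to the alternating sum of its `n` subwords obtained by deleting one
letter; the empty word spans the augmentation copy of `ℤ` in degree `0`. -/
noncomputable def bdry (X : Type*) : (List X →₀ ℤ) →ₗ[ℤ] (List X →₀ ℤ) :=
  Finsupp.lsum ℤ fun w => LinearMap.toSpanSingleton ℤ _
    (∑ k ∈ Finset.range w.length, ((-1 : ℤ) ^ k) • Finsupp.single (w.eraseIdx k) 1)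

open Finsupp

theorem Finsupp.map_mem_of_mem_supported {R M α : Type*} [Semiring R] [AddCommMonoid M]
    [Module R M] (F : (α →₀ R) →ₗ[R] M) {s : Set α} {N : Submodule R M}
    (h : ∀ a ∈ s, F (single a 1) ∈ N) {c : α →₀ R} (hc : c ∈ supported R R s) : F c ∈ N := by
  rw [supported_eq_span_single] at hc
  exact (Submodule.span_le (p := N.comap F)).2 (by rintro _ ⟨a, ha, rfl⟩; exact h a ha) hc

theorem List.eraseIdx_succ_eraseIdx_of_le {X : Type*} (w : List X) {l k : ℕ} (h : l ≤ k) :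
    (w.eraseIdx (k + 1)).eraseIdx l = (w.eraseIdx l).eraseIdx k := by
  induction w generalizing l k with
  | nil => simp
  | cons x t ih =>
    cases l with
    | zero => simp
    | succ l =>
      obtain ⟨k, rfl⟩ : ∃ k', k = k' + 1 := ⟨k - 1, by omega⟩
      simp only [List.eraseIdx_cons_succ, ih (Nat.le_of_succ_le_succ h)]

section Boundary

variable {X : Type*}

theorem bdry_single (w : List X) :
    bdry X (single w 1) =
      ∑ k ∈ Finset.range w.length, ((-1 : ℤ) ^ k) • single (w.eraseIdx k) 1 := by
  simp [bdry, LinearMap.toSpanSingleton_apply]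

theorem bdry_bdry_single (w : List X) : bdry X (bdry X (single w 1)) = 0 := by
  have hlen : ∀ k ∈ Finset.range w.length, (w.eraseIdx k).length = w.length - 1 := by
    intro k hk
    rw [List.length_eraseIdx_of_lt (Finset.mem_range.1 hk)]
  rw [bdry_single, map_sum]
  simp only [map_smul, bdry_single]
  rw [Finset.sum_congr rfl fun k hk => by rw [hlen k hk]]
  simp only [Finset.smul_sum, smul_smul]
  rw [← Finset.sum_product']
  -- the face relation `∂ₗ ∂ₖ₊₁ = ∂ₖ ∂ₗ` (`l ≤ k`) pairs off the terms with opposite signs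
  refine Finset.sum_involution
    (fun p _ => if p.2 < p.1 then (p.2, p.1 - 1) else (p.2 + 1, p.1)) ?_ ?_ ?_ ?_
  · rintro ⟨k, l⟩ hp
    simp only [Finset.mem_product, Finset.mem_range] at hp
    split_ifs with h
    · obtain ⟨k, rfl⟩ : ∃ k', k = k' + 1 := ⟨k - 1, by omega⟩
      rw [Nat.add_sub_cancel, List.eraseIdx_succ_eraseIdx_of_le w (by omega), ← add_smul]
      exact smul_eq_zero_of_left (by ring) _
    · rw [List.eraseIdx_succ_eraseIdx_of_le w (by omega), ← add_smul]
      exact smul_eq_zero_of_left (by ring) _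
  · rintro ⟨k, l⟩ _ _
    split_ifs with h <;> simp [Prod.ext_iff] <;> omega
  · rintro ⟨k, l⟩ hp
    simp only [Finset.mem_product, Finset.mem_range] at hp ⊢
    split_ifs <;> omega
  · rintro ⟨k, l⟩ _
    split_ifs with h h' h' <;> simp [Prod.ext_iff] <;> omega

theorem bdry_bdry (c : List X →₀ ℤ) : bdry X (bdry X c) = 0 := by
  induction c using Finsupp.induction_linear with
  | zero => simp
  | add f g hf hg => rw [map_add, map_add, hf, hg, add_zero]
  | single w b => rw [← smul_single_one, map_smul, map_smul, bdry_bdry_single, smul_zero]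

end Boundary

section Cone

variable {X : Type*} [DecidableEq X]

noncomputable def cone (a : X) : (List X →₀ ℤ) →ₗ[ℤ] (List X →₀ ℤ) :=
  Finsupp.lsum ℤ fun w => LinearMap.toSpanSingleton ℤ _
    (if a ∈ w then 0 else single (a :: w) 1)

theorem cone_single (a : X) (w : List X) :
    cone a (single w 1) = if a ∈ w then 0 else single (a :: w) 1 := by
  simp [cone, LinearMap.toSpanSingleton_apply]

theorem bdry_cone_add_cone_bdry_single_of_notMem {a : X} {w : List X} (ha : a ∉ w) :
    bdry X (cone a (single w 1)) + cone a (bdry X (single w 1)) = single w 1 := by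
  have ha' : ∀ k, a ∉ w.eraseIdx k := fun k h => ha (List.mem_of_mem_eraseIdx h)
  rw [cone_single, if_neg ha, bdry_single, List.length_cons, Finset.sum_range_succ',
    bdry_single, map_sum]
  simp only [List.eraseIdx_cons_succ, List.eraseIdx_cons_zero, pow_zero, one_smul, map_smul,
    cone_single, ha', if_false, pow_succ, mul_neg_one, neg_smul, Finset.sum_neg_distrib]
  abel

theorem bdry_cone_add_cone_bdry_single_of_mem {a : X} {w : List X} (hw : w.Nodup) (ha : a ∈ w) :
    bdry X (cone a (single w 1)) + cone a (bdry X (single w 1)) =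
      ((-1 : ℤ) ^ w.idxOf a) • single (a :: w.erase a) 1 := by
  have hidx : w.idxOf a < w.length := List.idxOf_lt_length_iff.2 ha
  rw [cone_single, if_pos ha, map_zero, zero_add, bdry_single, map_sum,
    Finset.sum_eq_single_of_mem (w.idxOf a) (Finset.mem_range.2 hidx)]
  · rw [← List.erase_eq_eraseIdx_of_idxOf rfl, map_smul, cone_single,
      if_neg fun h => ((hw.mem_erase_iff).1 h).1 rfl]
  · intro k _ hk
    have : a ∈ w.eraseIdx k :=
      List.mem_eraseIdx_iff_getElem.2 ⟨w.idxOf a, hidx, Ne.symm hk, List.getElem_idxOf hidx⟩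
    rw [map_smul, cone_single, if_pos this, smul_zero]

end Cone

section Acyclicity

variable {X : Type*}

def injWordsMissingIn (n : ℕ) (s : Set X) : Set (List X) :=
  {w | w.length = n ∧ w.Nodup ∧ ∀ a ∉ s, a ∈ w}

theorem injWordsMissingIn_mono (n : ℕ) {s t : Set X} (hst : s ⊆ t) :
    injWordsMissingIn n s ⊆ injWordsMissingIn n t :=
  fun _ ⟨hlen, hnd, hcov⟩ => ⟨hlen, hnd, fun a ha => hcov a fun has => ha (hst has)⟩

theorem injWordsMissingIn_empty [Fintype X] {n : ℕ} (hn : n < Fintype.card X) :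
    injWordsMissingIn n (∅ : Set X) = ∅ := by
  classical
  refine Set.eq_empty_of_forall_notMem fun w ⟨hlen, hnd, hcov⟩ => hn.not_ge ?_
  calc Fintype.card X = (Finset.univ : Finset X).card := Finset.card_univ.symm
    _ ≤ w.toFinset.card := Finset.card_le_card fun a _ => List.mem_toFinset.2 (hcov a id)
    _ = n := by rw [List.toFinset_card_of_nodup hnd, hlen]

variable [DecidableEq X]

theorem cone_mem_supported {n : ℕ} {s : Set X} (a : X) {c : List X →₀ ℤ}
    (hc : c ∈ supported ℤ ℤ (injWordsMissingIn n s)) :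
    cone a c ∈ supported ℤ ℤ (injWordsMissingIn (n + 1) s) := by
  refine map_mem_of_mem_supported (cone a) (fun w hw => ?_) hc
  obtain ⟨hlen, hnd, hcov⟩ := hw
  rw [cone_single]
  split_ifs with ha
  · exact zero_mem _
  · refine single_mem_supported ℤ 1 (show a :: w ∈ injWordsMissingIn (n + 1) s from ?_)
    exact ⟨by simp [hlen], hnd.cons ha, fun b hb => List.mem_cons_of_mem a (hcov b hb)⟩

theorem single_sub_homotopy_mem_supported {n : ℕ} {s : Set X} {a : X} {w : List X}
    (hw : w ∈ injWordsMissingIn n (insert a s)) :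
    single w 1 - (bdry X (cone a (single w 1)) + cone a (bdry X (single w 1))) ∈
      supported ℤ ℤ (injWordsMissingIn n s) := by
  obtain ⟨hlen, hnd, hcov⟩ := hw
  by_cases ha : a ∈ w
  · rw [bdry_cone_add_cone_bdry_single_of_mem hnd ha]
    have hcov' : ∀ b ∉ s, b ∈ w := fun b hb => by
      by_cases hba : b = a
      · exact hba ▸ ha
      · exact hcov b (by simp [hba, hb])
    refine sub_mem (single_mem_supported ℤ 1 ⟨hlen, hnd, hcov'⟩)
      (Submodule.smul_mem _ _ (single_mem_supported ℤ 1 ⟨?_, ?_, fun b hb => ?_⟩))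
    · rw [List.length_cons, List.length_erase_of_mem ha, hlen]
      exact Nat.sub_add_cancel (hlen ▸ List.length_pos_of_mem ha)
    · exact (hnd.erase a).cons fun h => (hnd.mem_erase_iff.1 h).1 rfl
    · by_cases hba : b = a
      · exact hba ▸ List.mem_cons_self
      · exact List.mem_cons_of_mem a ((List.mem_erase_of_ne hba).2 (hcov' b hb))
  · rw [bdry_cone_add_cone_bdry_single_of_notMem ha, sub_self]
    exact zero_mem _

theorem exists_bdry_eq_of_mem_supported [Fintype X] {n : ℕ} (hn : n < Fintype.card X)
    (s : Finset X) {c : List X →₀ ℤ} (hc : c ∈ supported ℤ ℤ (injWordsMissingIn n s))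
    (hcyc : bdry X c = 0) :
    ∃ b ∈ supported ℤ ℤ (injWordsMissingIn (n + 1) s), bdry X b = c := by
  induction s using Finset.induction_on generalizing c with
  | empty =>
    rw [Finset.coe_empty, injWordsMissingIn_empty hn, supported_empty,
      Submodule.mem_bot] at hc
    exact ⟨0, zero_mem _, by rw [hc, map_zero]⟩
  | insert a s _ ih =>
    rw [Finset.coe_insert] at hc ⊢
    have hc' : c - bdry X (cone a c) ∈ supported ℤ ℤ (injWordsMissingIn n s) := by
      convert map_mem_of_mem_supported (LinearMap.id - (bdry X ∘ₗ cone a + cone a ∘ₗ bdry X))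
        (fun w hw => single_sub_homotopy_mem_supported hw) hc using 1
      simp [hcyc]
    obtain ⟨b, hb, hbc⟩ := ih hc' (by rw [map_sub, hcyc, bdry_bdry, sub_zero])
    refine ⟨b + cone a c, add_mem ?_ (cone_mem_supported a hc), ?_⟩
    · exact supported_mono (injWordsMissingIn_mono _ (Set.subset_insert a s)) hb
    · rw [map_add, hbc, sub_add_cancel]

end Acyclicity

/-- Farmer's theorem: the augmented complex of injective words on `{1,…,m}`
has vanishing homology in every degree `n < m`. -/
theorem farmer_acyclicity (m n : ℕ) (hn : n < m) (c : List (Fin m) →₀ ℤ)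
    (hlen : ∀ w ∈ c.support, w.length = n) (hinj : ∀ w ∈ c.support, w.Nodup)
    (hcyc : bdry (Fin m) c = 0) :
    ∃ b : List (Fin m) →₀ ℤ,
      (∀ w ∈ b.support, w.length = n + 1 ∧ w.Nodup) ∧ bdry (Fin m) b = c := by
  have hc : c ∈ supported ℤ ℤ (injWordsMissingIn n ((Finset.univ : Finset (Fin m)) : Set _)) :=
    fun w hw => ⟨hlen w hw, hinj w hw, fun a ha => (ha (Finset.mem_univ a)).elim⟩
  obtain ⟨b, hb, hbc⟩ :=
    exists_bdry_eq_of_mem_supported (by rwa [Fintype.card_fin]) Finset.univ hc hcyc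
  exact ⟨b, fun w hw => ⟨(hb hw).1, (hb hw).2.1⟩, hbc⟩
end

section
/- If F is an infinite field or V is an infinite-dimensional F-vector space, then |G^vec| = ∞: for every finite sequence of vectors in V there exists a vector of V in G^vec-general position to it. -/
open scoped Classical

/-- The linear-independence general position relation `G^vec`: `x` is in general
position to `y` iff every vanishing linear combination of the entries of `x` and
`y` with at most `dim V` nonzero coefficients has all coefficients on `x` equal
to zero. (The bound is read as a cardinal so that it is no restriction when `V`
is infinite-dimensional.) -/
def Gvec (F : Type*) {V : Type*} [Field F] [AddCommGroup V] [Module F V]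
    (x y : List V) : Prop :=
  ∀ (a : Fin x.length → F) (b : Fin y.length → F),
    (((Finset.univ.filter fun i => a i ≠ 0).card +
        (Finset.univ.filter fun j => b j ≠ 0).card : ℕ) : Cardinal) ≤ Module.rank F V →
      (∑ i, a i • x.get i) + (∑ j, b j • y.get j) = 0 → ∀ i, a i = 0

/-!
If `x` is not in general position to `b`, then `x` lies in the span of fewer than `dim V`
entries of `b`, and such a span is a proper subspace. So it suffices to pick `x` outside the
finitely many proper subspaces spanned by entries of `b`: over an infinite field a vector space
is not a finite union of proper subspaces, and in infinite dimension any `x` outside the span of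
all of `b` will do.
-/

open Submodule

section

variable {F V : Type*} [Field F] [AddCommGroup V] [Module F V]

lemma span_image_ne_top_of_card_lt_rank {ι : Type*} {v : ι → V} {S : Finset ι}
    (hS : (S.card : Cardinal) < Module.rank F V) : span F (v '' S) ≠ ⊤ := by
  intro htop
  have hrank := rank_span_finset_le (R := F) (S.image v)
  rw [Finset.coe_image, htop, rank_top] at hrank
  exact (hrank.trans (Nat.cast_le.2 Finset.card_image_le)).not_gt hS

lemma gvec_singleton_of_forall {x : V} {b : List V}
    (H : ∀ (a : F) (c : Fin b.length → F),
      ((1 + (Finset.univ.filter fun j => c j ≠ 0).card : ℕ) : Cardinal) ≤ Module.rank F V →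
        a • x + ∑ j, c j • b.get j = 0 → a = 0) :
    Gvec F [x] b := by
  intro a c hcard hsum i
  obtain rfl : i = 0 := Fin.eq_zero i
  by_cases ha : a 0 = 0
  · exact ha
  refine H (a 0) c ?_ (by simpa using hsum)
  simpa [Finset.filter_singleton, ha] using hcard

lemma gvec_singleton_of_forall_notMem_span {x : V} {b : List V}
    (hx : ∀ S : Finset (Fin b.length), span F (b.get '' S) ≠ ⊤ → x ∉ span F (b.get '' S)) :
    Gvec F [x] b := by
  refine gvec_singleton_of_forall fun a c hcard hsum => ?_
  by_contra ha
  set S := Finset.univ.filter fun j => c j ≠ 0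
  refine hx S (span_image_ne_top_of_card_lt_rank ?_) ?_
  · calc (S.card : Cardinal) < ((1 + S.card : ℕ) : Cardinal) := by norm_cast; omega
      _ ≤ Module.rank F V := hcard
  · have hc : ∑ j, c j • b.get j ∈ span F (b.get '' S) := by
      refine sum_mem fun j _ => ?_
      by_cases hj : c j = 0
      · simp [hj]
      · exact smul_mem _ _ (subset_span ⟨j, by simp [S, hj], rfl⟩)
    rw [← smul_mem_iff _ ha, eq_neg_of_add_eq_zero_left hsum]
    exact neg_mem hc

end

/-- If `F` is an infinite field or `V` is infinite-dimensional, then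
`|G^vec| = ∞`: every finite sequence of vectors of `V` admits a vector of `V`
in `G^vec`-general position to it. -/
theorem Gvec_bound_infinite (F V : Type*) [Field F] [AddCommGroup V] [Module F V]
    (h : Infinite F ∨ ¬ Module.Finite F V) (b : List V) :
    ∃ x : V, Gvec F [x] b := by
  rcases h with hF | hV
  · obtain ⟨x, hx⟩ := exists_forall_notMem_of_forall_ne_top
      (fun S : {S : Finset (Fin b.length) // span F (b.get '' S) ≠ ⊤} => span F (b.get '' S))
      (fun S => S.2)
    exact ⟨x, gvec_singleton_of_forall_notMem_span fun S hS => hx ⟨S, hS⟩⟩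
  · have hspan : span F (Set.range b.get) ≠ ⊤ := fun htop =>
      hV ⟨htop ▸ fg_span (Set.finite_range _)⟩
    obtain ⟨x, -, hx⟩ := SetLike.exists_of_lt hspan.lt_top
    exact ⟨x, gvec_singleton_of_forall_notMem_span fun S _ hxS =>
      hx (span_mono (Set.image_subset_range _ _) hxS)⟩
end

section
/- If V is an F-vector space with dim(V) ≥ card(F), then |G^vec| = dim(V) + 1. That is: (1) for every sequence of dim(V) vectors there exists a vector in G^vec-general position to it, and (2) for a basis e_1,...,e_{n-1} of V (n = dim V + 1), no vector of V is in G^vec-general position to the sequence (e_1,...,e_{n-1}, e_1 + e_2 + ... + e_{n-1}). -/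
open scoped Classical

/-! If `y₁, …, yₙ` span `V` and `n ≤ dim V`, they form a basis and `∑ yⱼ` is in general
position to them: a relation `∑ yⱼ + ∑ bⱼ yⱼ = 0` forces every `bⱼ = -1`, i.e. `n + 1` nonzero
coefficients. If they do not span, any vector outside their span is in general position.

Conversely, write `x = ∑ cⱼ eⱼ`. For every `t` we have `x + ∑ (t - cⱼ) eⱼ - t ∑ eⱼ = 0`, and the
coefficient at index `k` of the sequence vanishes iff `t` equals the `k`-th entry of
`(c₁, …, cₙ, 0)`. As `card F ≤ n`, pigeonhole makes some `t` occur twice among these `n + 1`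
values, which leaves at most `n - 1` nonzero coefficients on the sequence. -/

open Finset

section

variable {F V : Type*} [Field F] [AddCommGroup V] [Module F V]

theorem gvec_singleton_iff {x : V} {y : List V} :
    Gvec F [x] y ↔ ∀ b : Fin y.length → F,
      ((#{j | b j ≠ 0} + 1 : ℕ) : Cardinal) ≤ Module.rank F V →
        x + ∑ j, b j • y.get j ≠ 0 := by
  constructor
  · intro hG b hb hsum
    exact one_ne_zero <| hG (fun _ => 1) b (by simpa [add_comm] using hb) (by simpa using hsum) 0
  · intro H a b hab hsum i
    by_contra ha
    obtain rfl : i = 0 := Subsingleton.elim (α := Fin 1) i 0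
    refine H (fun j => (a 0)⁻¹ * b j) ?_ ?_
    · simpa [ha, add_comm, filter_singleton] using hab
    · simpa [ha, mul_smul, ← smul_sum] using congrArg ((a 0)⁻¹ • ·) hsum

theorem gvec_singleton_of_notMem_span {x : V} {y : List V}
    (hx : x ∉ Submodule.span F (Set.range y.get)) : Gvec F [x] y := by
  refine gvec_singleton_iff.2 fun b _ hsum => hx ?_
  rw [← neg_neg x, neg_eq_of_add_eq_zero_right hsum]
  exact neg_mem (sum_mem fun j _ => Submodule.smul_mem _ _ (Submodule.subset_span ⟨j, rfl⟩))

theorem gvec_sum_singleton_of_linearIndependent {y : List V} (hy : LinearIndependent F y.get)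
    (hrank : Module.rank F V ≤ y.length) : Gvec F [∑ j, y.get j] y := by
  refine gvec_singleton_iff.2 fun b hb hsum => ?_
  have hcoeff : ∀ j, 1 + b j = 0 := by
    refine Fintype.linearIndependent_iff.1 hy _ ?_
    simpa [add_smul, sum_add_distrib] using hsum
  have hsupp : #{j | b j ≠ 0} = y.length := by
    rw [filter_true_of_mem fun j _ hj => by simpa [hj] using hcoeff j, card_univ,
      Fintype.card_fin]
  rw [hsupp] at hb
  exact absurd (hb.trans hrank) (by norm_cast; omega)

theorem exists_gvec_singleton [FiniteDimensional F V] (y : List V)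
    (hy : y.length ≤ Module.finrank F V) : ∃ x : V, Gvec F [x] y := by
  by_cases hspan : Submodule.span F (Set.range y.get) = ⊤
  · have hlen : y.length = Module.finrank F V := by
      refine le_antisymm hy ?_
      have := finrank_range_le_card (R := F) y.get
      rwa [Set.finrank, hspan, finrank_top, Fintype.card_fin] at this
    refine ⟨_, gvec_sum_singleton_of_linearIndependent
      (linearIndependent_of_top_le_span_of_card_eq_finrank hspan.ge (by simpa using hlen)) ?_⟩
    rw [hlen, Module.finrank_eq_rank]
  · obtain ⟨x, -, hx⟩ := SetLike.exists_of_lt (lt_top_iff_ne_top.2 hspan)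
    exact ⟨x, gvec_singleton_of_notMem_span hx⟩

theorem Fintype.exists_card_filter_ne_add_two_le {ι α : Type*} [Fintype ι] [Fintype α]
    (f : ι → α) (h : Fintype.card α < Fintype.card ι) :
    ∃ t : α, #{i | f i ≠ t} + 2 ≤ Fintype.card ι := by
  obtain ⟨i, j, hij, hf⟩ := Fintype.exists_ne_map_eq_of_card_lt f h
  refine ⟨f i, ?_⟩
  have hdisj : Disjoint (univ.filter (f · ≠ f i)) {i, j} := by simp [hf]
  calc #{k | f k ≠ f i} + 2 = #(univ.filter (f · ≠ f i) ∪ {i, j}) := by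
        rw [card_union_of_disjoint hdisj, card_pair hij]
    _ ≤ Fintype.card ι := card_le_univ _

theorem not_gvec_singleton_ofFn {m : ℕ} {x : V} (f : Fin m → V) (b : Fin m → F)
    (hb : ((#{j | b j ≠ 0} + 1 : ℕ) : Cardinal) ≤ Module.rank F V)
    (hsum : x + ∑ j, b j • f j = 0) : ¬ Gvec F [x] (List.ofFn f) := by
  rw [gvec_singleton_iff]
  push Not
  have hlen : (List.ofFn f).length = m := List.length_ofFn
  refine ⟨fun j => b (Fin.cast hlen j), ?_, ?_⟩
  · have hcard : #{j | b (Fin.cast hlen j) ≠ 0} = #{j | b j ≠ 0} :=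
      card_equiv (finCongr hlen) (by simp)
    rwa [hcard]
  · convert hsum using 2
    exact Fintype.sum_equiv (finCongr hlen) _ _ fun _ => by simp [Fin.cast]

theorem List.ofFn_append_singleton {α : Type*} {n : ℕ} (f : Fin n → α) (a : α) :
    List.ofFn f ++ [a] = List.ofFn (Fin.snoc f a) := by
  rw [List.ofFn_succ_last]
  simp

theorem not_gvec_basis_append_sum [Fintype F] {n : ℕ} (e : Module.Basis (Fin n) F V)
    (h : Fintype.card F ≤ n) (x : V) : ¬ Gvec F [x] (List.ofFn e ++ [∑ i, e i]) := by
  set c : Fin (n + 1) → F := Fin.snoc (e.repr x) 0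
  obtain ⟨t, ht⟩ :=
    Fintype.exists_card_filter_ne_add_two_le c (by simpa using Nat.lt_succ_of_le h)
  set b : Fin (n + 1) → F := Fin.snoc (fun j => t - e.repr x j) (-t)
  have hb : ∀ k, b k ≠ 0 ↔ c k ≠ t := by
    refine Fin.lastCases ?_ fun j => ?_
    · simp [b, c, ne_comm]
    · simpa [b, c, sub_eq_zero] using ne_comm
  rw [List.ofFn_append_singleton]
  refine not_gvec_singleton_ofFn _ b ?_ ?_
  · rw [rank_eq_card_basis e, Fintype.card_fin, Nat.cast_le, filter_congr fun k _ => hb k]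
    simpa using ht
  · rw [Fin.sum_univ_castSucc]
    simp only [b, Fin.snoc_castSucc, Fin.snoc_last, sub_smul, sum_sub_distrib, ← smul_sum,
      e.sum_repr]
    module

end

/-- If `dim V ≥ card F` then `|G^vec| = dim V + 1`: (1) every sequence of
`dim V` vectors admits a vector in `G^vec`-general position to it, and (2) for a
basis `e₁,…,e_{n-1}` of `V`, no vector of `V` is in `G^vec`-general position to
the sequence `(e₁,…,e_{n-1}, e₁ + ⋯ + e_{n-1})`. -/
theorem Gvec_bound_of_dim_ge_card (F V : Type*) [Field F] [Fintype F]
    [AddCommGroup V] [Module F V] [FiniteDimensional F V]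
    (h : Fintype.card F ≤ Module.finrank F V) :
    (∀ b : List V, b.length = Module.finrank F V → ∃ x : V, Gvec F [x] b) ∧
    (∀ e : Module.Basis (Fin (Module.finrank F V)) F V, ∀ x : V,
      ¬ Gvec F [x] (List.ofFn e ++ [∑ i, e i])) :=
  ⟨fun b hb => exists_gvec_singleton b hb.le, fun e => not_gvec_basis_append_sum e h⟩
end

section
/- If dim(V) ≥ card(F) with basis e_1,...,e_{n-1} (n - 1 = dim V), then any vector x = a_1e_1 + ... + a_{n-1}e_{n-1} with all a_i nonzero has two equal coefficients a_p = a_q with p ≠ q, and consequently x is not in G^vec-general position to the sequence (e_1,...,e_{n-1}, e_1 + ... + e_{n-1}). -/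
open scoped Classical

open Finset

theorem exists_ne_map_eq_of_forall_ne {α β : Type*} [Fintype α] [Fintype β] [DecidableEq β]
    (f : α → β) (b : β) (hf : ∀ x, f x ≠ b) (h : Fintype.card β ≤ Fintype.card α) :
    ∃ p q, p ≠ q ∧ f p = f q := by
  have hlt : #(univ.erase b) < #(univ : Finset α) := by
    rw [card_erase_of_mem (mem_univ b), card_univ, card_univ]
    have : 0 < Fintype.card β := Fintype.card_pos_iff.mpr ⟨b⟩
    omega
  obtain ⟨p, -, q, -, hne, heq⟩ :=
    exists_ne_map_eq_of_card_lt_of_maps_to hlt (f := f) fun x _ => by simp [hf x]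
  exact ⟨p, q, hne, heq⟩

theorem card_filter_add_two_le {α : Type*} [Fintype α] {P : α → Prop} [DecidablePred P]
    {p q : α} (hpq : p ≠ q) (hp : ¬ P p) (hq : ¬ P q) :
    #(univ.filter P) + 2 ≤ Fintype.card α := by
  have hsub : univ.filter P ⊆ univ \ {p, q} := by
    intro x hx
    simp only [mem_filter, mem_univ, true_and] at hx
    simp only [mem_sdiff, mem_univ, true_and, mem_insert, mem_singleton, not_or]
    exact ⟨fun h => hp (h ▸ hx), fun h => hq (h ▸ hx)⟩
  have hcard := card_sdiff_add_card_eq_card (subset_univ ({p, q} : Finset α))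
  rw [card_pair hpq, card_univ] at hcard
  exact hcard ▸ Nat.add_le_add_right (card_le_card hsub) 2

section GeneralPosition

variable {F V : Type*} [Field F] [AddCommGroup V] [Module F V]

theorem not_Gvec_singleton_of_eq_sum {v : V} {y : List V} (b : Fin y.length → F)
    (hv : v = ∑ j, b j • y.get j)
    (hcard : ((#(univ.filter fun j => b j ≠ 0) + 1 : ℕ) : Cardinal) ≤ Module.rank F V) :
    ¬ Gvec F [v] y := by
  intro hG
  have hb : #(univ.filter fun j => -b j ≠ 0) = #(univ.filter fun j => b j ≠ 0) := by
    simp only [ne_eq, neg_eq_zero]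
  have hrel : (∑ _i : Fin 1, (1 : F) • v) + ∑ j, -b j • y.get j = 0 := by
    simp [hv, neg_smul]
  refine one_ne_zero (hG (fun _ => 1) (fun j => -b j) ?_ hrel 0)
  simpa [hb, add_comm] using hcard

theorem not_Gvec_singleton_ofFn_of_eq_sum {n : ℕ} {v : V} (g : Fin n → V) (b : Fin n → F)
    (hv : v = ∑ j, b j • g j)
    (hcard : ((#(univ.filter fun j => b j ≠ 0) + 1 : ℕ) : Cardinal) ≤ Module.rank F V) :
    ¬ Gvec F [v] (List.ofFn g) := by
  let σ := finCongr (List.length_ofFn (f := g))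
  refine not_Gvec_singleton_of_eq_sum (fun j => b (σ j)) ?_ ?_
  · rw [hv, ← σ.sum_comp]
    simp [σ]
    rfl
  · rwa [card_equiv σ (t := univ.filter fun j => b j ≠ 0) fun j => by simp]

end GeneralPosition

/-- If `dim V = n - 1 ≥ card F` with basis `e₁,…,e_{n-1}`, then any vector
`x = a₁e₁ + ⋯ + a_{n-1}e_{n-1}` with all `aᵢ ≠ 0` has two equal coefficients,
and consequently `x` is not in `G^vec`-general position to
`(e₁,…,e_{n-1}, e₁ + ⋯ + e_{n-1})`. -/
theorem Gvec_pigeonhole (F V : Type*) [Field F] [Fintype F]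
    [AddCommGroup V] [Module F V] [FiniteDimensional F V]
    (hd : Fintype.card F ≤ Module.finrank F V)
    (e : Module.Basis (Fin (Module.finrank F V)) F V)
    (a : Fin (Module.finrank F V) → F) (ha : ∀ i, a i ≠ 0) :
    (∃ p q, p ≠ q ∧ a p = a q) ∧
    ¬ Gvec F [∑ i, a i • e i] (List.ofFn e ++ [∑ i, e i]) := by
  obtain ⟨p, q, hpq, heq⟩ :=
    exists_ne_map_eq_of_forall_ne a 0 ha (by rwa [Fintype.card_fin])
  refine ⟨⟨p, q, hpq, heq⟩, ?_⟩
  have hy : List.ofFn e ++ [∑ i, e i] = List.ofFn (Fin.snoc e (∑ i, e i)) := by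
    rw [List.ofFn_succ']
    simp
  -- `x = ∑ (aᵢ - a_p) eᵢ + a_p (e₁ + ⋯ + e_{n-1})`, and the coefficients at `p` and `q` vanish.
  let b : Fin (Module.finrank F V + 1) → F := Fin.snoc (fun i => a i - a p) (a p)
  have hv : ∑ i, a i • e i = ∑ j, b j • Fin.snoc (α := fun _ => V) e (∑ i, e i) j := by
    simp [b, Fin.sum_univ_castSucc, sub_smul, smul_sum]
  have hsupp : #(univ.filter fun j => b j ≠ 0) + 1 ≤ Module.finrank F V := by
    have := card_filter_add_two_le (P := fun j => b j ≠ 0)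
      (Fin.castSucc_injective _ |>.ne hpq) (by simp [b]) (by simp [b, heq])
    rw [Fintype.card_fin] at this
    omega
  rw [hy]
  refine not_Gvec_singleton_ofFn_of_eq_sum _ b hv ?_
  rw [← Module.finrank_eq_rank]
  exact_mod_cast hsupp
end
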